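/- arXiv:2505.20220 — 5 statements merged into one kernel-verified Lean document; each statement's English description precedes it below -/
import Mathlib

section
/- Let A be a uniform algebra on a compact space X and let E ⊆ X be a clopen subset which is a reducing set for A (i.e. for every μ ∈ A^⊥ ∩ M(X), the restriction χ_E·μ also annihilates A). Then the characteristic function χ_E belongs to A. -/
/-! If `g ∉ A`, Hahn–Banach separates `g` from the closed subspace `A` by a functional `T` that
annihilates `A` with `T g ≠ 0`. The reducing property applied to `f = 1 ∈ A` gives
`T g = T (g * 1) = 0`. -/

open RCLike

section Annihilator

variable {𝕜 E : Type*} [RCLike 𝕜] [AddCommGroup E] [Module 𝕜 E]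

theorem LinearMap.map_eq_zero_of_forall_re_lt (f : E →ₗ[𝕜] 𝕜) {p : Submodule 𝕜 E} {u : ℝ}
    (hu : ∀ y ∈ p, re (f y) < u) {y : E} (hy : y ∈ p) : f y = 0 := by
  by_contra hfy
  have hscaled : f (((u + 1 : ℝ) / f y) • y) = (u + 1 : ℝ) := by
    rw [map_smul, smul_eq_mul, div_mul_cancel₀ _ hfy]
  have := hu _ (p.smul_mem ((u + 1 : ℝ) / f y) hy)
  rw [hscaled, ofReal_re] at this
  linarith

variable [TopologicalSpace E] [Module ℝ E] [IsScalarTower ℝ 𝕜 E] [IsTopologicalAddGroup E]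
  [ContinuousSMul 𝕜 E] [LocallyConvexSpace ℝ E]

theorem Submodule.mem_of_forall_dual_eq_zero {p : Submodule 𝕜 E} (hp : IsClosed (p : Set E))
    {x : E} (hx : ∀ T : StrongDual 𝕜 E, (∀ y ∈ p, T y = 0) → T x = 0) : x ∈ p := by
  by_contra hxp
  obtain ⟨T, u, hTp, hTx⟩ :=
    RCLike.geometric_hahn_banach_closed_point (𝕜 := 𝕜) (p.restrictScalars ℝ).convex hp hxp
  have hT : ∀ y ∈ p, T y = 0 := fun y hy ↦ T.toLinearMap.map_eq_zero_of_forall_re_lt hTp hy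
  have hu : 0 < u := by simpa using hTp 0 p.zero_mem
  rw [hx T hT, map_zero] at hTx
  linarith

end Annihilator

theorem indicator_mem_of_clopen_reducing_general
    (X : Type*) [TopologicalSpace X] [CompactSpace X]
    (A : Subalgebra ℂ C(X, ℂ)) (hclosed : IsClosed (A : Set C(X, ℂ)))
    (g : C(X, ℂ))
    (hreducing : ∀ T : C(X, ℂ) →L[ℂ] ℂ, (∀ f ∈ A, T f = 0) → ∀ f ∈ A, T (g * f) = 0) :
    g ∈ A :=
  Submodule.mem_of_forall_dual_eq_zero (p := Subalgebra.toSubmodule A) hclosed fun T hT ↦ by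
    simpa only [mul_one] using hreducing T hT 1 A.one_mem

/-- Let `A` be a uniform algebra on a compact space `X` and `E ⊆ X` a clopen
reducing set for `A`: for every measure (functional) `T ∈ A^⊥`, the restricted measure
`χ_E·T : f ↦ T(χ_E f)` also annihilates `A`. Then the characteristic function `χ_E` (here the
continuous function `g` with `g = 1` on `E`, `g = 0` off `E`) belongs to `A`.
(Measures on `X` are identified with continuous linear functionals on `C(X)` by the Riesz
representation theorem.) -/
theorem indicator_mem_of_clopen_reducing
    (X : Type*) [TopologicalSpace X] [CompactSpace X] [T2Space X]
    (A : Subalgebra ℂ C(X, ℂ)) (hclosed : IsClosed (A : Set C(X, ℂ)))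
    (hsep : ∀ x y : X, x ≠ y → ∃ f ∈ A, f x ≠ f y)
    (E : Set X) (hE : IsClopen E)
    (g : C(X, ℂ)) (hg : ∀ x, g x = Set.indicator E 1 x)
    (hreducing : ∀ T : C(X, ℂ) →L[ℂ] ℂ, (∀ f ∈ A, T f = 0) → ∀ f ∈ A, T (g * f) = 0) :
    g ∈ A :=
  indicator_mem_of_clopen_reducing_general X A hclosed g hreducing
end

section
/- Let μ, ν be mutually singular complex regular Borel measures on a compact Hausdorff space X. Then ‖μ + ν‖ = ‖μ - ν‖ = ‖μ‖ + ‖ν‖ (total variation norms). Conversely, if ‖μ ± ν‖ = ‖μ‖ + ‖ν‖ for both signs, then μ ⊥ ν. -/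
/-!
Both conditions are equivalent to `u x = 0 ∨ v x = 0` for `ρ`-a.e. `x`. Since the triangle
inequality holds pointwise, the two integral identities hold iff `‖u + v‖ = ‖u‖ + ‖v‖` and
`‖u - v‖ = ‖u‖ + ‖v‖` a.e.; in a strictly convex space these equalities say that `u x` lies on
the same ray as both `v x` and `-v x`, which forces one of them to vanish. Conversely, if a.e. one
of them vanishes, the zero set of a measurable representative of `u` separates the two densities.
-/

open MeasureTheory

theorem eq_zero_or_eq_zero_of_sameRay_of_sameRay_neg {M : Type*} [AddCommGroup M] [Module ℝ M]
    {x y : M} (h : SameRay ℝ x y) (hneg : SameRay ℝ x (-y)) : x = 0 ∨ y = 0 := by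
  rw [or_iff_not_imp_left]
  intro hx
  obtain ⟨r, hr, rfl⟩ := h.exists_nonneg_left hx
  rw [← neg_smul, sameRay_smul_right_iff] at hneg
  simp [le_antisymm (neg_nonneg.1 (hneg.resolve_right hx)) hr]

theorem norm_add_eq_and_norm_sub_eq_iff {E : Type*} [NormedAddCommGroup E] [NormedSpace ℝ E]
    [StrictConvexSpace ℝ E] {x y : E} :
    ‖x + y‖ = ‖x‖ + ‖y‖ ∧ ‖x - y‖ = ‖x‖ + ‖y‖ ↔ x = 0 ∨ y = 0 := by
  refine ⟨fun ⟨hadd, hsub⟩ => ?_, ?_⟩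
  · rw [sub_eq_add_neg, ← norm_neg y] at hsub
    exact eq_zero_or_eq_zero_of_sameRay_of_sameRay_neg (sameRay_iff_norm_add.2 hadd)
      (sameRay_iff_norm_add.2 hsub)
  · rintro (rfl | rfl) <;> simp

section Integral

variable {α E : Type*} [MeasurableSpace α] {μ : Measure α} [NormedAddCommGroup E]
  {f g : α → E}

theorem integral_norm_add_eq_iff (hf : Integrable f μ) (hg : Integrable g μ) :
    ∫ x, ‖f x + g x‖ ∂μ = ∫ x, ‖f x‖ ∂μ + ∫ x, ‖g x‖ ∂μ ↔
      ∀ᵐ x ∂μ, ‖f x + g x‖ = ‖f x‖ + ‖g x‖ := by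
  rw [← integral_add hf.norm hg.norm]
  exact integral_eq_iff_of_ae_le (hf.add hg).norm (hf.norm.add hg.norm)
    (.of_forall fun x => norm_add_le _ _)

theorem integral_norm_sub_eq_iff (hf : Integrable f μ) (hg : Integrable g μ) :
    ∫ x, ‖f x - g x‖ ∂μ = ∫ x, ‖f x‖ ∂μ + ∫ x, ‖g x‖ ∂μ ↔
      ∀ᵐ x ∂μ, ‖f x - g x‖ = ‖f x‖ + ‖g x‖ := by
  simpa only [sub_eq_add_neg, Pi.neg_apply, norm_neg] using integral_norm_add_eq_iff hf hg.neg

end Integral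

theorem exists_measurableSet_ae_eq_zero_on_and_off_iff {α M N : Type*} [MeasurableSpace α]
    {μ : Measure α} [Zero M] [Zero N] [MeasurableSpace M] [MeasurableSingletonClass M]
    {f : α → M} {g : α → N} (hf : AEMeasurable f μ) :
    (∃ S : Set α, MeasurableSet S ∧ (∀ᵐ x ∂μ, x ∈ S → f x = 0) ∧ (∀ᵐ x ∂μ, x ∉ S → g x = 0)) ↔
      ∀ᵐ x ∂μ, f x = 0 ∨ g x = 0 := by
  constructor
  · rintro ⟨S, -, hfS, hgS⟩
    filter_upwards [hfS, hgS] with x hfx hgx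
    by_cases hx : x ∈ S
    · exact .inl (hfx hx)
    · exact .inr (hgx hx)
  · intro h
    refine ⟨{x | hf.mk f x = 0}, hf.measurable_mk (measurableSet_singleton 0), ?_, ?_⟩
    · filter_upwards [hf.ae_eq_mk] with x hx hxS
      rwa [hx]
    · filter_upwards [hf.ae_eq_mk, h] with x hx hfg hxS
      exact hfg.resolve_left (hx ▸ hxS)

theorem mutuallySingular_iff_norm_add_and_sub_general
    (X : Type*)
    [MeasurableSpace X]
    (ρ : Measure X)
    (u v : X → ℂ) (hu : Integrable u ρ) (hv : Integrable v ρ) :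
    (∃ S : Set X, MeasurableSet S ∧ (∀ᵐ x ∂ρ, x ∈ S → u x = 0) ∧ (∀ᵐ x ∂ρ, x ∉ S → v x = 0))
    ↔ ((∫ x, ‖u x + v x‖ ∂ρ = ∫ x, ‖u x‖ ∂ρ + ∫ x, ‖v x‖ ∂ρ) ∧
       (∫ x, ‖u x - v x‖ ∂ρ = ∫ x, ‖u x‖ ∂ρ + ∫ x, ‖v x‖ ∂ρ)) := by
  rw [exists_measurableSet_ae_eq_zero_on_and_off_iff hu.aemeasurable,
    integral_norm_add_eq_iff hu hv, integral_norm_sub_eq_iff hu hv, ← Filter.eventually_and]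
  exact Filter.eventually_congr (.of_forall fun x => norm_add_eq_and_norm_sub_eq_iff.symm)

/-- Metric characterization of mutual singularity in `M(X)`. A complex regular
Borel measure on the compact Hausdorff space `X` is written in the form `u·ρ` (a complex density
`u ∈ L¹(ρ)` against a nonnegative finite regular measure `ρ`; any pair of complex measures can be
so represented with a common `ρ`). Its total variation norm is `∫‖u‖ dρ`. Two such measures
`u·ρ`, `v·ρ` are mutually singular iff they are carried by disjoint Borel sets, i.e. there is a
Borel set `S` with `u = 0` a.e. on `S` and `v = 0` a.e. off `S`. The claim: `u·ρ ⊥ v·ρ` iff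
`‖u·ρ + v·ρ‖ = ‖u·ρ - v·ρ‖ = ‖u·ρ‖ + ‖v·ρ‖`. -/
theorem mutuallySingular_iff_norm_add_and_sub
    (X : Type*) [TopologicalSpace X] [CompactSpace X] [T2Space X]
    [MeasurableSpace X] [BorelSpace X]
    (ρ : Measure X) [IsFiniteMeasure ρ] [ρ.Regular]
    (u v : X → ℂ) (hu : Integrable u ρ) (hv : Integrable v ρ) :
    (∃ S : Set X, MeasurableSet S ∧ (∀ᵐ x ∂ρ, x ∈ S → u x = 0) ∧ (∀ᵐ x ∂ρ, x ∉ S → v x = 0))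
    ↔ ((∫ x, ‖u x + v x‖ ∂ρ = ∫ x, ‖u x‖ ∂ρ + ∫ x, ‖v x‖ ∂ρ) ∧
       (∫ x, ‖u x - v x‖ ∂ρ = ∫ x, ‖u x‖ ∂ρ + ∫ x, ‖v x‖ ∂ρ)) :=
  mutuallySingular_iff_norm_add_and_sub_general X ρ u v hu hv
end

section
/- Let N be a band in M(Y) for Y compact Hausdorff. Then the pre-annihilator ^⊥N = {f ∈ C(Y) : ∫ f dν = 0 for all ν ∈ N} is a closed ideal of C(Y), and consequently the weak-star closure of N in M(Y) = C(Y)* equals M(E) = {ν ∈ M(Y) : supp(ν) ⊆ E} for some closed set E ⊆ Y. -/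
/-!
Since a band is stable under `ν ↦ g • ν`, its pre-annihilator `I` is an ideal, and it is closed
as an intersection of kernels of continuous functionals. A closed ideal of `C(Y)` is the ideal of
functions vanishing on the closed set `E = (setOfIdeal I)ᶜ`. The weak-star closure of a subspace
of the dual is its double annihilator (geometric Hahn–Banach in the locally convex space
`WeakDual`, whose continuous functionals are evaluations), so it consists of the functionals
killing every function that vanishes on `E`.
-/

theorem Submodule.apply_eq_zero_of_forall_re_lt {𝕜 V : Type*} [RCLike 𝕜] [AddCommGroup V]
    [Module 𝕜 V] (S : Submodule 𝕜 V) (φ : V →ₗ[𝕜] 𝕜) {u : ℝ}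
    (h : ∀ v ∈ S, RCLike.re (φ v) < u) : ∀ v ∈ S, φ v = 0 := by
  intro v hv
  by_contra hφv
  have := h (((u : 𝕜) / φ v) • v) (S.smul_mem _ hv)
  rw [map_smul, smul_eq_mul, div_mul_cancel₀ _ hφv, RCLike.ofReal_re] at this
  exact lt_irrefl u this

namespace WeakDual

variable {𝕜 E : Type*} [RCLike 𝕜] [AddCommGroup E] [Module 𝕜 E] [TopologicalSpace E]

instance : IsScalarTower ℝ 𝕜 (WeakDual 𝕜 E) :=
  inferInstanceAs (IsScalarTower ℝ 𝕜 (E →L[𝕜] 𝕜))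

instance : LocallyConvexSpace ℝ (WeakDual 𝕜 E) :=
  inferInstanceAs (LocallyConvexSpace ℝ (WeakBilin (topDualPairing 𝕜 E)))

theorem exists_apply_eq_eval (φ : StrongDual 𝕜 (WeakDual 𝕜 E)) :
    ∃ x : E, ∀ T : WeakDual 𝕜 E, φ T = T x := by
  obtain ⟨x, hx⟩ := LinearMap.dualEmbedding_surjective (topDualPairing 𝕜 E) φ
  exact ⟨x, fun T => (DFunLike.congr_fun hx T).symm⟩

theorem closure_submodule_eq (S : Submodule 𝕜 (WeakDual 𝕜 E)) :
    closure (S : Set (WeakDual 𝕜 E)) =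
      {T | ∀ x : E, (∀ T' ∈ S, T' x = 0) → T x = 0} := by
  refine (closure_minimal (fun T hT x hx => hx T hT) ?_).antisymm fun T hT => ?_
  · simp only [Set.ofPred_forall]
    exact isClosed_iInter fun x => isClosed_iInter fun _ =>
      isClosed_eq (eval_continuous x) continuous_const
  by_contra hTS
  obtain ⟨φ, u, hφS, hφT⟩ := RCLike.geometric_hahn_banach_closed_point (𝕜 := 𝕜) (x := T)
    (S.topologicalClosure.restrictScalars ℝ).convex S.isClosed_topologicalClosure
    (by rwa [Submodule.coe_restrictScalars, S.topologicalClosure_coe])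
  obtain ⟨x, hx⟩ := exists_apply_eq_eval φ
  have hu : 0 < u := by simpa using hφS 0 (zero_mem _)
  have hφS' := S.topologicalClosure.apply_eq_zero_of_forall_re_lt φ.toLinearMap hφS
  have hTx := hT x fun T' hT' => by rw [← hx]; exact hφS' _ (S.le_topologicalClosure hT')
  rw [hx, hTx, map_zero] at hφT
  exact hu.not_gt hφT

end WeakDual

section Preannihilator

variable {𝕜 A : Type*} [NontriviallyNormedField 𝕜] [NormedCommRing A] [NormedAlgebra 𝕜 A]

def preannihilatorIdeal (N : Set (StrongDual 𝕜 A))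
    (hN : ∀ T ∈ N, ∀ g : A, T.comp (ContinuousLinearMap.mul 𝕜 A g) ∈ N) : Ideal A where
  carrier := {f | ∀ T ∈ N, T f = 0}
  zero_mem' T _ := map_zero T
  add_mem' hf hg T hT := by rw [map_add, hf T hT, hg T hT, add_zero]
  smul_mem' g f hf T hT := hf _ (hN T hT g)

theorem isClosed_preannihilatorIdeal (N : Set (StrongDual 𝕜 A))
    (hN : ∀ T ∈ N, ∀ g : A, T.comp (ContinuousLinearMap.mul 𝕜 A g) ∈ N) :
    IsClosed (preannihilatorIdeal N hN : Set A) := by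
  show IsClosed {f | ∀ T ∈ N, T f = 0}
  simp only [Set.ofPred_forall]
  exact isClosed_iInter fun T => isClosed_iInter fun _ =>
    isClosed_eq T.continuous continuous_const

end Preannihilator

theorem ContinuousMap.forall_compl_setOfIdeal_eq_zero_iff {X 𝕜 : Type*} [TopologicalSpace X]
    [CompactSpace X] [T2Space X] [RCLike 𝕜] {I : Ideal C(X, 𝕜)} (hI : IsClosed (I : Set C(X, 𝕜)))
    (f : C(X, 𝕜)) : (∀ x ∈ (setOfIdeal I)ᶜ, f x = 0) ↔ f ∈ I := by
  conv_rhs => rw [← idealOfSet_ofIdeal_isClosed hI]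
  exact mem_idealOfSet.symm

theorem band_preannihilator_ideal_and_weakStar_closure_general
    (Y : Type*) [TopologicalSpace Y] [CompactSpace Y] [T2Space Y]
    (N : Submodule ℂ (C(Y, ℂ) →L[ℂ] ℂ))
    (hNband : ∀ T ∈ N, ∀ g : C(Y, ℂ), T.comp (ContinuousLinearMap.mul ℂ (C(Y, ℂ)) g) ∈ N) :
    (IsClosed {f : C(Y, ℂ) | ∀ T ∈ N, T f = 0} ∧
      ∀ f ∈ {f : C(Y, ℂ) | ∀ T ∈ N, T f = 0}, ∀ g : C(Y, ℂ),
        g * f ∈ {f : C(Y, ℂ) | ∀ T ∈ N, T f = 0}) ∧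
    (∃ E : Set Y, IsClosed E ∧
      closure ((fun T : C(Y, ℂ) →L[ℂ] ℂ => StrongDual.toWeakDual T) '' N)
        = {T : WeakDual ℂ C(Y, ℂ) | ∀ f : C(Y, ℂ), (∀ y ∈ E, f y = 0) → T f = 0}) := by
  set I := preannihilatorIdeal (N : Set (StrongDual ℂ C(Y, ℂ))) hNband
  have hI : IsClosed (I : Set C(Y, ℂ)) := isClosed_preannihilatorIdeal _ hNband
  refine ⟨⟨hI, fun f hf g => I.mul_mem_left g hf⟩,
    (ContinuousMap.setOfIdeal I)ᶜ, (ContinuousMap.setOfIdeal_open I).isClosed_compl, ?_⟩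
  have himage : (fun T : C(Y, ℂ) →L[ℂ] ℂ => StrongDual.toWeakDual T) '' N =
      N.map (StrongDual.toWeakDual : StrongDual ℂ C(Y, ℂ) ≃ₗ[ℂ] _).toLinearMap :=
    (Submodule.map_coe _ _).symm
  rw [himage, WeakDual.closure_submodule_eq]
  ext T
  refine forall_congr' fun f => imp_congr_left ?_
  rw [ContinuousMap.forall_compl_setOfIdeal_eq_zero_iff hI]
  exact ⟨fun h T' hT' => h _ ⟨T', hT', rfl⟩, fun h _ ⟨T', hT', hT'_eq⟩ => hT'_eq ▸ h T' hT'⟩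

/-- Let `N` be a band in `M(Y)`, `Y` compact Hausdorff (measures identified with
functionals on `C(Y)`; the band is a norm-closed subspace stable under multiplication by bounded
densities, in particular `g·ν : f ↦ ν(g·f)` belongs to `N` for `ν ∈ N`, `g ∈ C(Y)`). Then the
pre-annihilator `^⊥N = {f ∈ C(Y) : ∫ f dν = 0 ∀ ν ∈ N}` is a closed ideal of `C(Y)`, and
consequently the weak-star closure of `N` in `M(Y) = C(Y)*` equals
`M(E) = {ν : supp(ν) ⊆ E} = {ν : ν(f) = 0 whenever f vanishes on E}` for some closed `E ⊆ Y`. -/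
theorem band_preannihilator_ideal_and_weakStar_closure
    (Y : Type*) [TopologicalSpace Y] [CompactSpace Y] [T2Space Y]
    (N : Submodule ℂ (C(Y, ℂ) →L[ℂ] ℂ))
    (hNclosed : IsClosed (N : Set (C(Y, ℂ) →L[ℂ] ℂ)))
    (hNband : ∀ T ∈ N, ∀ g : C(Y, ℂ), T.comp (ContinuousLinearMap.mul ℂ (C(Y, ℂ)) g) ∈ N) :
    (IsClosed {f : C(Y, ℂ) | ∀ T ∈ N, T f = 0} ∧
      ∀ f ∈ {f : C(Y, ℂ) | ∀ T ∈ N, T f = 0}, ∀ g : C(Y, ℂ),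
        g * f ∈ {f : C(Y, ℂ) | ∀ T ∈ N, T f = 0}) ∧
    (∃ E : Set Y, IsClosed E ∧
      closure ((fun T : C(Y, ℂ) →L[ℂ] ℂ => StrongDual.toWeakDual T) '' N)
        = {T : WeakDual ℂ C(Y, ℂ) | ∀ f : C(Y, ℂ), (∀ y ∈ E, f y = 0) → T f = 0}) :=
  band_preannihilator_ideal_and_weakStar_closure_general Y N hNband
end

section
/- Let π : Y → X be a continuous surjection of compact Hausdorff spaces, A a uniform algebra on X, and E ⊆ Y a closed set which is reducing for the pulled-back algebra L^π(A) = {f∘π : f ∈ A} on Y. Then E is saturated with respect to π, i.e. E = π^{-1}(π(E)); equivalently χ_E = χ_{π(E)} ∘ π. -/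
open MeasureTheory Set

namespace MeasureTheory.Measure

variable {X : Type*} [MeasurableSpace X]

theorem Regular.of_measure_compl_finite_eq_zero [TopologicalSpace X] [T1Space X]
    (μ : Measure X) [IsFiniteMeasure μ] {s : Set X} (hs : s.Finite) (hμs : μ sᶜ = 0) :
    μ.Regular where
  toOuterRegular := ⟨fun A _ r hr => by
    refine ⟨(s \ A)ᶜ, fun a ha h => h.2 ha, hs.sdiff.isClosed.isOpen_compl, ?_⟩
    calc μ (s \ A)ᶜ = μ (sᶜ ∪ A) := by rw [compl_sdiff, union_comm]
      _ ≤ μ sᶜ + μ A := measure_union_le _ _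
      _ < r := by rwa [hμs, zero_add]⟩
  innerRegular U _ r hr :=
    ⟨U ∩ s, inter_subset_left, (hs.inter_of_right U).isCompact, by rwa [measure_inter_conull hμs]⟩

variable [MeasurableSingletonClass X]

theorem regular_dirac_add_dirac [TopologicalSpace X] [T1Space X] (x y : X) :
    (dirac x + dirac y).Regular :=
  Regular.of_measure_compl_finite_eq_zero _ ((finite_singleton y).insert x) (by simp)

theorem integrable_dirac_add_dirac {E : Type*} [NormedAddCommGroup E] (f : X → E) (x y : X) :
    Integrable f (dirac x + dirac y) :=
  (integrable_dirac enorm_lt_top).add_measure (integrable_dirac enorm_lt_top)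

theorem integral_dirac_add_dirac {E : Type*} [NormedAddCommGroup E] [NormedSpace ℝ E]
    [CompleteSpace E] (f : X → E) (x y : X) :
    ∫ u, f u ∂(dirac x + dirac y) = f x + f y := by
  rw [integral_add_measure (integrable_dirac enorm_lt_top) (integrable_dirac enorm_lt_top),
    integral_dirac, integral_dirac]

end MeasureTheory.Measure

theorem reducing_set_saturated_general
    (X Y : Type*) [TopologicalSpace X]
    [TopologicalSpace Y] [T2Space Y]
    [MeasurableSpace Y] [BorelSpace Y]
    (π : Y → X)
    (A : Subalgebra ℂ C(X, ℂ))
    (E : Set Y)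
    (hreducing : ∀ ρ : Measure Y, IsFiniteMeasure ρ → ρ.Regular →
      ∀ w : Y → ℂ, Integrable w ρ →
      (∀ f ∈ A, ∫ y, f (π y) * w y ∂ρ = 0) →
      ∀ f ∈ A, ∫ y in E, f (π y) * w y ∂ρ = 0) :
    E = π ⁻¹' (π '' E) := by
  classical
  refine (subset_preimage_image π E).antisymm ?_
  rintro z ⟨y, hyE, hπzy⟩
  by_contra hzE
  have hyz : y ≠ z := fun h => hzE (h ▸ hyE)
  -- `w (δ_z + δ_y)` is the measure `δ_z - δ_y`, which annihilates every `f ∘ π` since `π z = π y`.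
  let w : Y → ℂ := fun u => if u = z then 1 else -1
  have hann : ∀ f ∈ A, ∫ u, f (π u) * w u ∂(Measure.dirac z + Measure.dirac y) = 0 := by
    intro f _
    simp [Measure.integral_dirac_add_dirac, w, hyz, hπzy]
  have hrestrict := hreducing _ inferInstance (Measure.regular_dirac_add_dirac z y) w
    (Measure.integrable_dirac_add_dirac w z y) hann 1 A.one_mem
  -- Restricted to `E` it becomes `-δ_y`, which does not annihilate `1 ∈ A`.
  rw [Measure.restrict_add, restrict_dirac, restrict_dirac, if_neg hzE, if_pos hyE, zero_add,
    integral_dirac] at hrestrict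
  simp [w, hyz] at hrestrict

/-- Let `π : Y → X` be a continuous surjection of compact Hausdorff spaces,
`A` a uniform algebra on `X`, and `E ⊆ Y` a closed reducing set for the pulled-back algebra
`L^π(A) = {f ∘ π : f ∈ A}` on `Y`: whenever a complex regular Borel measure `w·ρ` on `Y`
annihilates `L^π(A)`, its restriction `χ_E·(w·ρ)` annihilates `L^π(A)` as well. Then `E` is
saturated with respect to `π`: `E = π⁻¹(π(E))`. -/
theorem reducing_set_saturated
    (X Y : Type*) [TopologicalSpace X] [CompactSpace X] [T2Space X]
    [TopologicalSpace Y] [CompactSpace Y] [T2Space Y]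
    [MeasurableSpace Y] [BorelSpace Y]
    (π : Y → X) (hπ : Continuous π) (hsurj : Function.Surjective π)
    (A : Subalgebra ℂ C(X, ℂ)) (hclosed : IsClosed (A : Set C(X, ℂ)))
    (hsep : ∀ x y : X, x ≠ y → ∃ f ∈ A, f x ≠ f y)
    (E : Set Y) (hE : IsClosed E)
    (hreducing : ∀ ρ : Measure Y, IsFiniteMeasure ρ → ρ.Regular →
      ∀ w : Y → ℂ, Integrable w ρ →
      (∀ f ∈ A, ∫ y, f (π y) * w y ∂ρ = 0) →
      ∀ f ∈ A, ∫ y in E, f (π y) * w y ∂ρ = 0) :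
    E = π ⁻¹' (π '' E) :=
  reducing_set_saturated_general X Y π A E hreducing
end

section
/- Let G ⊂ ℂ^d be a bounded domain that is stable: for each λ ∈ G there exist bounded linear operators T_k : A(G) → A(G), k = 1,…,d, with f - f(λ)·1 = ∑_{k=1}^d (z_k - λ_k)·T_k f for all f ∈ A(G), and ‖T_k f‖ ≤ C_λ‖f‖. Then the analogous decomposition holds in the bidual: for each F ∈ A(G)** and λ ∈ G there exist T̃_k F ∈ A(G)** with F - F(λ)·1 = ∑_{k=1}^d (ι(z_k) - λ_k)·T̃_k F and ‖T̃_k F‖ ≤ C_λ‖F‖, where multiplication is the Arens product. Consequently, the fiber of Sp(A(G)**) over each λ ∈ G (via ι*) is a singleton. -/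
set_option maxHeartbeats 1000000
set_option synthInstance.maxHeartbeats 500000

open NormedSpace ContinuousLinearMap

open scoped Classical

/-- Extension (by `0` off `closure G`) of a continuous function on `closure G ⊆ ℂ^d`. -/
noncomputable def extCl {d : ℕ} (G : Set (Fin d → ℂ))
    (f : C(↥(closure G), ℂ)) : (Fin d → ℂ) → ℂ :=
  fun z => if h : z ∈ closure G then f ⟨z, h⟩ else 0

/-- The algebra `A(G)`: continuous functions on `closure G` that are analytic
(complex-differentiable) on the open set `G ⊆ ℂ^d`. -/
noncomputable def ballAlgebra {d : ℕ} (G : Set (Fin d → ℂ)) : Subalgebra ℂ C(↥(closure G), ℂ) where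
  carrier := {f | DifferentiableOn ℂ (extCl G f) G}
  mul_mem' {f g} hf hg := (hf.mul hg).congr (fun z hz => by
    have hzc : z ∈ closure G := subset_closure hz
    simp [extCl, dif_pos hzc])
  add_mem' {f g} hf hg := (hf.add hg).congr (fun z hz => by
    have hzc : z ∈ closure G := subset_closure hz
    simp [extCl, dif_pos hzc])
  algebraMap_mem' r := (differentiableOn_const r).congr (fun z hz => by
    have hzc : z ∈ closure G := subset_closure hz
    simp [extCl, dif_pos hzc, Algebra.algebraMap_eq_smul_one])

/-- Instance-search helpers (needed in current Mathlib to find the norm on the double dual). -/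
noncomputable instance ballAlgebraDualSeminormed {d : ℕ} (G : Set (Fin d → ℂ))
    [CompactSpace ↥(closure G)] : SeminormedAddCommGroup (StrongDual ℂ ↥(ballAlgebra G)) :=
  inferInstance

noncomputable instance ballAlgebraDualNormedSpace {d : ℕ} (G : Set (Fin d → ℂ))
    [CompactSpace ↥(closure G)] : NormedSpace ℂ (StrongDual ℂ ↥(ballAlgebra G)) :=
  inferInstance

/-- The Arens multiplication of the canonical image `ι(g)`, `g ∈ A`, with `Φ ∈ A**`:
`(ι(g)·Φ)(μ) = Φ(μ ∘ (mul g))`. -/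
noncomputable def smulArens {A : Type*} [NormedRing A] [NormedAlgebra ℂ A]
    (g : A) (Φ : StrongDual ℂ (StrongDual ℂ A)) : StrongDual ℂ (StrongDual ℂ A) :=
  Φ.comp ((ContinuousLinearMap.compL ℂ A A ℂ).flip (ContinuousLinearMap.mul ℂ A g))

/-!
Transposing the stability identity `f - δ(f)·1 = ∑ₖ aₖ·Tₖ f` (with `aₖ = zₖ - λₖ`) twice gives the
same identity on `A**` with `T̃ₖ = Tₖ**`, since the bitranspose of left multiplication by `g` is
exactly the Arens product with `ι(g)`; moreover `‖Tₖ**‖ ≤ ‖Tₖ‖`, so no weak-star limits are needed.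
A character `φ` of `A**` with `φ(ι(zₖ)) = λₖ` kills every `ι(aₖ)`, so applying it to the bidual
identity leaves `φ(F) = F(δ_λ)`.
-/

namespace ContinuousLinearMap

variable {𝕜 E F : Type*} [NontriviallyNormedField 𝕜] [SeminormedAddCommGroup E] [NormedSpace 𝕜 E]
  [SeminormedAddCommGroup F] [NormedSpace 𝕜 F]

noncomputable def dualTranspose (T : E →L[𝕜] F) : StrongDual 𝕜 F →L[𝕜] StrongDual 𝕜 E :=
  (compL 𝕜 E F 𝕜).flip T

@[simp]
theorem dualTranspose_apply (T : E →L[𝕜] F) (μ : StrongDual 𝕜 F) :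
    dualTranspose T μ = μ.comp T :=
  rfl

theorem norm_dualTranspose_le (T : E →L[𝕜] F) : ‖dualTranspose T‖ ≤ ‖T‖ :=
  opNorm_le_bound _ (norm_nonneg T) fun μ => by
    simpa only [dualTranspose_apply, mul_comm ‖T‖] using opNorm_comp_le μ T

theorem norm_dualTranspose_dualTranspose_apply_le {T : E →L[𝕜] F} {C : ℝ}
    (hT : ∀ x, ‖T x‖ ≤ C * ‖x‖) (Φ : StrongDual 𝕜 (StrongDual 𝕜 E)) :
    ‖dualTranspose (dualTranspose T) Φ‖ ≤ max C 0 * ‖Φ‖ := by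
  have hT' : ‖T‖ ≤ max C 0 := opNorm_le_bound _ (le_max_right _ _) fun x =>
    (hT x).trans (mul_le_mul_of_nonneg_right (le_max_left _ _) (norm_nonneg x))
  calc ‖dualTranspose (dualTranspose T) Φ‖
      ≤ ‖dualTranspose (dualTranspose T)‖ * ‖Φ‖ := le_opNorm _ _
    _ ≤ max C 0 * ‖Φ‖ := by
      gcongr
      exact (norm_dualTranspose_le _).trans ((norm_dualTranspose_le T).trans hT')

end ContinuousLinearMap

open ContinuousLinearMap

section Arens

variable {A : Type*} [NormedRing A] [NormedAlgebra ℂ A] {ι : Type*} [Fintype ι]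
  {δ : StrongDual ℂ A} {a : ι → A} {T : ι → A →L[ℂ] A}

theorem smulArens_eq_dualTranspose (g : A) (Φ : StrongDual ℂ (StrongDual ℂ A)) :
    smulArens g Φ = dualTranspose (dualTranspose (mul ℂ A g)) Φ :=
  rfl

theorem sub_smul_eq_sum_dualTranspose (hT : ∀ f, f - δ f • 1 = ∑ k, a k * T k f)
    (μ : StrongDual ℂ A) :
    μ - μ 1 • δ = ∑ k, dualTranspose (T k) (dualTranspose (mul ℂ A (a k)) μ) := by
  ext f
  simpa [smul_eq_mul, mul_comm] using congrArg μ (hT f)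

theorem sub_smul_one_eq_sum_smulArens (hT : ∀ f, f - δ f • 1 = ∑ k, a k * T k f)
    (F : StrongDual ℂ (StrongDual ℂ A)) :
    F - F δ • inclusionInDoubleDual ℂ A 1
      = ∑ k, smulArens (a k) (dualTranspose (dualTranspose (T k)) F) := by
  ext μ
  have h := congrArg F (sub_smul_eq_sum_dualTranspose hT μ)
  simpa [smulArens_eq_dualTranspose, smul_eq_mul, mul_comm] using h

theorem apply_eq_of_sub_smul_one_eq_sum_smulArens
    (φ : StrongDual ℂ (StrongDual ℂ (StrongDual ℂ A)))
    (hmul : ∀ (g : A) (Φ : StrongDual ℂ (StrongDual ℂ A)),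
      φ (smulArens g Φ) = φ (inclusionInDoubleDual ℂ A g) * φ Φ)
    (hone : φ (inclusionInDoubleDual ℂ A 1) = 1)
    (ha : ∀ k, φ (inclusionInDoubleDual ℂ A (a k)) = 0)
    {F : StrongDual ℂ (StrongDual ℂ A)} {Ft : ι → StrongDual ℂ (StrongDual ℂ A)}
    (hF : F - F δ • inclusionInDoubleDual ℂ A 1 = ∑ k, smulArens (a k) (Ft k)) :
    φ F = F δ := by
  have h : φ F - F δ * φ (inclusionInDoubleDual ℂ A 1) = ∑ k, φ (smulArens (a k) (Ft k)) := by
    rw [← map_sum, ← hF, ← smul_eq_mul, ← map_smul]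
    exact (map_sub φ _ _).symm
  simp only [hmul, ha, hone, zero_mul, mul_one, Finset.sum_const_zero] at h
  exact sub_eq_zero.mp h

end Arens

theorem stable_domain_bidual_decomposition_and_singleton_fibers_general
    (d : ℕ) (G : Set (Fin d → ℂ))
    [CompactSpace ↥(closure G)]
    -- the coordinate functions, as elements of `A(G)`:
    (z : Fin d → ↥(ballAlgebra G))
    -- the evaluation functionals `δ_λ`, `λ ∈ G`:
    (δ : ∀ lam : Fin d → ℂ, lam ∈ G → StrongDual ℂ ↥(ballAlgebra G))
    -- stability of `G`:
    (hstable : ∀ (lam : Fin d → ℂ) (hlam : lam ∈ G), ∃ C : ℝ,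
      ∃ T : Fin d → (↥(ballAlgebra G) →L[ℂ] ↥(ballAlgebra G)),
        (∀ (k : Fin d) (f : ↥(ballAlgebra G)), ‖T k f‖ ≤ C * ‖f‖) ∧
        (∀ f : ↥(ballAlgebra G),
          f - (δ lam hlam f) • 1 = ∑ k, (z k - (lam k) • 1) * T k f)) :
    ∀ (lam : Fin d → ℂ) (hlam : lam ∈ G), ∃ C : ℝ,
      (∀ F : StrongDual ℂ (StrongDual ℂ ↥(ballAlgebra G)),
        ∃ Ft : Fin d → StrongDual ℂ (StrongDual ℂ ↥(ballAlgebra G)),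
          (∀ k, ‖Ft k‖ ≤ C * ‖F‖) ∧
          F - (F (δ lam hlam)) • inclusionInDoubleDual ℂ ↥(ballAlgebra G) 1
            = ∑ k, smulArens (z k - (lam k) • 1) (Ft k)) ∧
      (∀ φ : StrongDual ℂ (StrongDual ℂ (StrongDual ℂ ↥(ballAlgebra G))),
        (∀ (g : ↥(ballAlgebra G)) (Φ : StrongDual ℂ (StrongDual ℂ ↥(ballAlgebra G))),
          φ (smulArens g Φ) = φ (inclusionInDoubleDual ℂ ↥(ballAlgebra G) g) * φ Φ) →
        φ (inclusionInDoubleDual ℂ ↥(ballAlgebra G) 1) = 1 →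
        (∀ k, φ (inclusionInDoubleDual ℂ ↥(ballAlgebra G) (z k)) = lam k) →
        ∀ F : StrongDual ℂ (StrongDual ℂ ↥(ballAlgebra G)), φ F = F (δ lam hlam)) := by
  intro lam hlam
  obtain ⟨C, T, hT, hdecomp⟩ := hstable lam hlam
  refine ⟨max C 0, fun F => ⟨_, fun k => norm_dualTranspose_dualTranspose_apply_le (hT k) F,
    sub_smul_one_eq_sum_smulArens hdecomp F⟩, fun φ hmul hone hcoord F => ?_⟩
  refine apply_eq_of_sub_smul_one_eq_sum_smulArens φ hmul hone (fun k => ?_)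
    (sub_smul_one_eq_sum_smulArens hdecomp F)
  rw [map_sub, map_smul, map_sub, map_smul, hcoord, hone, smul_eq_mul, mul_one, sub_self]

/-- Let `G ⊂ ℂ^d` be a bounded domain which is *stable*: for each `λ ∈ G`
there are bounded linear operators `T_k : A(G) → A(G)` with
`f - f(λ)·1 = ∑ (z_k - λ_k)·(T_k f)` and `‖T_k f‖ ≤ C_λ·‖f‖`. Then the analogous decomposition
holds in the bidual `A(G)**` with the Arens product (with the same constant `C_λ`), and
consequently the fiber of `Sp(A(G)**)` over each `λ ∈ G` is a singleton: every multiplicative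
unital functional `φ` on `A(G)**` with `φ(ι(z_k)) = λ_k` for all `k` satisfies `φ(F) = F(λ)`. -/
theorem stable_domain_bidual_decomposition_and_singleton_fibers
    (d : ℕ) (G : Set (Fin d → ℂ)) (hG : IsOpen G) (hGne : G.Nonempty)
    (hGconn : IsConnected G) (hGbdd : Bornology.IsBounded G)
    [CompactSpace ↥(closure G)]
    -- the coordinate functions, as elements of `A(G)`:
    (z : Fin d → ↥(ballAlgebra G))
    (hz : ∀ (k : Fin d) (x : ↥(closure G)), (z k : C(↥(closure G), ℂ)) x = (x : Fin d → ℂ) k)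
    -- the evaluation functionals `δ_λ`, `λ ∈ G`:
    (δ : ∀ lam : Fin d → ℂ, lam ∈ G → StrongDual ℂ ↥(ballAlgebra G))
    (hδ : ∀ (lam : Fin d → ℂ) (hlam : lam ∈ G) (f : ↥(ballAlgebra G)),
      δ lam hlam f = (f : C(↥(closure G), ℂ)) ⟨lam, subset_closure hlam⟩)
    -- stability of `G`:
    (hstable : ∀ (lam : Fin d → ℂ) (hlam : lam ∈ G), ∃ C : ℝ,
      ∃ T : Fin d → (↥(ballAlgebra G) →L[ℂ] ↥(ballAlgebra G)),
        (∀ (k : Fin d) (f : ↥(ballAlgebra G)), ‖T k f‖ ≤ C * ‖f‖) ∧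
        (∀ f : ↥(ballAlgebra G),
          f - (δ lam hlam f) • 1 = ∑ k, (z k - (lam k) • 1) * T k f)) :
    ∀ (lam : Fin d → ℂ) (hlam : lam ∈ G), ∃ C : ℝ,
      (∀ F : StrongDual ℂ (StrongDual ℂ ↥(ballAlgebra G)),
        ∃ Ft : Fin d → StrongDual ℂ (StrongDual ℂ ↥(ballAlgebra G)),
          (∀ k, ‖Ft k‖ ≤ C * ‖F‖) ∧
          F - (F (δ lam hlam)) • inclusionInDoubleDual ℂ ↥(ballAlgebra G) 1
            = ∑ k, smulArens (z k - (lam k) • 1) (Ft k)) ∧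
      (∀ φ : StrongDual ℂ (StrongDual ℂ (StrongDual ℂ ↥(ballAlgebra G))),
        (∀ (g : ↥(ballAlgebra G)) (Φ : StrongDual ℂ (StrongDual ℂ ↥(ballAlgebra G))),
          φ (smulArens g Φ) = φ (inclusionInDoubleDual ℂ ↥(ballAlgebra G) g) * φ Φ) →
        φ (inclusionInDoubleDual ℂ ↥(ballAlgebra G) 1) = 1 →
        (∀ k, φ (inclusionInDoubleDual ℂ ↥(ballAlgebra G) (z k)) = lam k) →
        ∀ F : StrongDual ℂ (StrongDual ℂ ↥(ballAlgebra G)), φ F = F (δ lam hlam)) :=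
  stable_domain_bidual_decomposition_and_singleton_fibers_general d G z δ hstable
end
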